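/- arXiv:2002.11387 — 4 statements merged into one kernel-verified Lean document; each statement's English description precedes it below -/
import Mathlib

section
/- Fix a winner number k with 1 ≤ k ≤ n and assume b_{n−k+1} > 0. The minimum-Gini function g*_k is nondecreasing in p on the interval (0, Σ_{i=n−k+1}^n b_i]: if 0 < p ≤ p' ≤ Σ_{i=n−k+1}^n b_i then g*_k(p) ≤ g*_k(p'). -/
open Finset

/-- The ascending rearrangement of a vector. -/
noncomputable def sortedAsc {n : ℕ} (a : Fin n → ℝ) : Fin n → ℝ :=
  a ∘ Tuple.sort a

/-- The Gini index of an ascending-sorted nonnegative vector `y` on `Fin k`: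
`2 (∑ i, i * y_i) / (k ∑ i, y_i) - (k+1)/k` (with 1-based weights). -/
noncomputable def gini {k : ℕ} (y : Fin k → ℝ) : ℝ :=
  2 * (∑ i : Fin k, (((i : ℕ) : ℝ) + 1) * y i) / (k * ∑ i, y i) - ((k : ℝ) + 1) / k

/-- The flexible Gini index with winner number `k`: the Gini index of the top `k`
entries of the ascending rearrangement of the allocation. -/
noncomputable def flexGini {n : ℕ} (k : ℕ) (a : Fin n → ℝ) : ℝ :=
  if h : k ≤ n then
    gini (fun i : Fin k => sortedAsc a ⟨n - k + i, by have := i.isLt; omega⟩)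
  else 0

/-- Feasibility of allocation `a` for budgets `b`, winner number `k`, price `p`. -/
def Feasible {n : ℕ} (b : Fin n → ℝ) (k : ℕ) (p : ℝ) (a : Fin n → ℝ) : Prop :=
  (∀ i, 0 ≤ a i) ∧ (∑ i, a i = 1) ∧ (∀ i, a i * p ≤ b i) ∧
    n - k ≤ (Finset.univ.filter fun i => a i = 0).card

open Classical in
/-- The minimum flexible Gini index over feasible allocations (`1` if none exists). -/
noncomputable def gStar {n : ℕ} (b : Fin n → ℝ) (k : ℕ) (p : ℝ) : ℝ :=
  if ∃ a, Feasible b k p a then sInf (flexGini k '' {a | Feasible b k p a}) else 1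

/-- The maximum price for winner number `k` under Gini cap `g`. -/
noncomputable def pStar {n : ℕ} (b : Fin n → ℝ) (k : ℕ) (g : ℝ) : ℝ :=
  sSup {p : ℝ | 0 < p ∧ gStar b k p ≤ g}

/-- The Gini mechanism's price: the maximum of `pStar` over allowed winner numbers. -/
noncomputable def pStarK {n : ℕ} (b : Fin n → ℝ) (K : Finset ℕ) (g : ℝ) : ℝ :=
  sSup ((fun k => pStar b k g) '' (K : Set ℕ))

/-- The `(m+1)`-st smallest budget (0-based index `m`). -/
noncomputable def nthSmallest {n : ℕ} (b : Fin n → ℝ) (m : ℕ) : ℝ :=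
  if h : m < n then sortedAsc b ⟨m, h⟩ else 0

/-- The allocation cap `C` at price `p` for winner number `k`. -/
noncomputable def capOf {n : ℕ} (b : Fin n → ℝ) (k : ℕ) (p : ℝ) : ℝ :=
  sInf {C : ℝ | 0 < C ∧
    1 ≤ ∑ i ∈ Finset.univ.filter (fun i : Fin n => n - k ≤ (i : ℕ)),
        min (sortedAsc b i / p) C}

/-- The winner number chosen by the Gini mechanism (ties broken in favor of more winners). -/
noncomputable def mechWinnerNum {n : ℕ} (b : Fin n → ℝ) (K : Finset ℕ) (g : ℝ) : ℕ :=
  sSup {k | k ∈ K ∧ pStar b k g = pStarK b K g}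

/-- The allocation of the Gini mechanism: agents in the bottom `n - k` positions (by budget)
receive `0`; the `k` winners receive `min (bᵢ/p, C)` at the mechanism price `p`. -/
noncomputable def mechAlloc {n : ℕ} (b : Fin n → ℝ) (K : Finset ℕ) (g : ℝ) : Fin n → ℝ :=
  fun i =>
    if ((Tuple.sort b).symm i : ℕ) < n - mechWinnerNum b K g then 0
    else min (b i / pStarK b K g) (capOf b (mechWinnerNum b K g) (pStarK b K g))

/-- Agent `i`'s spending under the Gini mechanism. -/
noncomputable def spend {n : ℕ} (b : Fin n → ℝ) (K : Finset ℕ) (g : ℝ) (i : Fin n) : ℝ :=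
  mechAlloc b K g i * pStarK b K g

/-- Agent `i`'s utility under the Gini mechanism when her valuation is `v`. -/
noncomputable def util {n : ℕ} (b : Fin n → ℝ) (K : Finset ℕ) (g : ℝ) (i : Fin n) (v : ℝ) : ℝ :=
  mechAlloc b K g i * (v - pStarK b K g)

/-
Raising the price only tightens the budget constraints `a_i p ≤ b_i`, so the feasible set
shrinks and the infimum of the flexible Gini index over it can only grow. Once the feasible set
becomes empty, `g*` takes the value `1`, which bounds every Gini index of a nonnegative vector
from above.
-/

section Gini

variable {k : ℕ} {y : Fin k → ℝ}

lemma gini_le_one (hy : ∀ i, 0 ≤ y i) : gini y ≤ 1 := by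
  rcases Nat.eq_zero_or_pos k with rfl | hk
  · simp [gini]
  have hk0 : (0 : ℝ) < k := by exact_mod_cast hk
  have hweights : ∑ i : Fin k, (((i : ℕ) : ℝ) + 1) * y i ≤ k * ∑ i, y i := by
    rw [Finset.mul_sum]
    refine Finset.sum_le_sum fun i _ => mul_le_mul_of_nonneg_right ?_ (hy i)
    exact_mod_cast i.isLt
  have hratio : 2 * (∑ i : Fin k, (((i : ℕ) : ℝ) + 1) * y i) / (k * ∑ i, y i) ≤ 2 :=
    div_le_of_le_mul₀ (mul_nonneg hk0.le (Finset.sum_nonneg fun i _ => hy i)) zero_le_two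
      (by linarith)
  have hshift : 1 ≤ ((k : ℝ) + 1) / k := by rw [le_div_iff₀ hk0]; linarith
  unfold gini
  linarith

lemma neg_two_le_gini (hy : ∀ i, 0 ≤ y i) : -2 ≤ gini y := by
  rcases Nat.eq_zero_or_pos k with rfl | hk
  · simp [gini]
  have hratio : 0 ≤ 2 * (∑ i : Fin k, (((i : ℕ) : ℝ) + 1) * y i) / (k * ∑ i, y i) :=
    div_nonneg
      (mul_nonneg zero_le_two (Finset.sum_nonneg fun i _ => mul_nonneg (by positivity) (hy i)))
      (mul_nonneg k.cast_nonneg (Finset.sum_nonneg fun i _ => hy i))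
  have hshift : ((k : ℝ) + 1) / k ≤ 2 := by
    rw [div_le_iff₀ (by exact_mod_cast hk)]
    have : (1 : ℝ) ≤ k := by exact_mod_cast hk
    linarith
  unfold gini
  linarith

end Gini

section FlexGini

variable {n : ℕ} (k : ℕ) {a : Fin n → ℝ}

lemma flexGini_le_one (ha : ∀ i, 0 ≤ a i) : flexGini k a ≤ 1 := by
  unfold flexGini
  split_ifs
  · exact gini_le_one fun i => ha _
  · exact zero_le_one

lemma neg_two_le_flexGini (ha : ∀ i, 0 ≤ a i) : -2 ≤ flexGini k a := by
  unfold flexGini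
  split_ifs
  · exact neg_two_le_gini fun i => ha _
  · norm_num

end FlexGini

section GStar

variable {n : ℕ} {b : Fin n → ℝ} {k : ℕ} {p p' : ℝ} {a : Fin n → ℝ}

lemma Feasible.of_price_le (ha : Feasible b k p' a) (hp : p ≤ p') : Feasible b k p a := by
  obtain ⟨hnonneg, hsum, hbudget, hzeros⟩ := ha
  exact ⟨hnonneg, hsum, fun i => (mul_le_mul_of_nonneg_left hp (hnonneg i)).trans (hbudget i),
    hzeros⟩

lemma bddBelow_flexGini_feasible : BddBelow (flexGini k '' {a | Feasible b k p a}) :=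
  ⟨-2, by rintro _ ⟨a, ha, rfl⟩; exact neg_two_le_flexGini k ha.1⟩

lemma gStar_le_one : gStar b k p ≤ 1 := by
  unfold gStar
  split_ifs with h
  · obtain ⟨a, ha⟩ := h
    exact (csInf_le bddBelow_flexGini_feasible ⟨a, ha, rfl⟩).trans (flexGini_le_one k ha.1)
  · exact le_rfl

end GStar

/-- If `b_{n-k+1} > 0`, the minimum-Gini function `g*_k` is nondecreasing in
`p` on `(0, ∑_{i=n-k+1}^n b_i]`. -/
theorem gStar_mono {n : ℕ} (b : Fin n → ℝ)
    (k : ℕ) :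
    ∀ p p' : ℝ, 0 < p → p ≤ p' →
      p' ≤ (∑ i ∈ Finset.univ.filter (fun i : Fin n => n - k ≤ (i : ℕ)), b i) →
      gStar b k p ≤ gStar b k p' := by
  intro p p' _ hpp' _
  by_cases hfeas' : ∃ a, Feasible b k p' a
  · have hsub : {a | Feasible b k p' a} ⊆ {a | Feasible b k p a} :=
      fun a ha => Feasible.of_price_le ha hpp'
    obtain ⟨a, ha⟩ := hfeas'
    rw [gStar, if_pos ⟨a, hsub ha⟩, gStar, if_pos ⟨a, ha⟩]
    exact csInf_le_csInf bddBelow_flexGini_feasible ⟨_, a, ha, rfl⟩ (Set.image_mono hsub)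
  · calc gStar b k p ≤ 1 := gStar_le_one
      _ = gStar b k p' := by rw [gStar, if_neg hfeas']
end

section
/- Fix a winner number k with 1 ≤ k ≤ n and assume b_{n−k+1} > 0. The minimum-Gini function g*_k is continuous in p on the interval (0, Σ_{i=n−k+1}^n b_i]. -/
open Finset

/-!
Write `u = 1/p` and let `c` be the vector of the `k` largest budgets, with sum `S`. Sorting a
feasible allocation loses nothing, and a sorted one is determined by its top `k` entries `x`: a
sorted probability vector with `x ≤ u • c`. This constraint is jointly linear in `(u, x)` and the
Gini index is affine on probability vectors, so `u ↦ g*_k(1/u)` is convex on `[1/S, ∞)`, hence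
continuous on `(1/S, ∞)`. At the endpoint `u = 1/S`, the proportional allocation `c / S` is
admissible for every `u ≥ 1/S`, every admissible `x` lies within `ℓ¹`-distance `2 (u S - 1)` of
it, and the Gini index is `2`-Lipschitz for the `ℓ¹` distance.
-/

open Filter Topology

section Gini

variable {k : ℕ} {y z : Fin k → ℝ}

def rankSum (y : Fin k → ℝ) : ℝ := ∑ i : Fin k, (((i : ℕ) : ℝ) + 1) * y i

theorem natCast_pos_of_sum_eq_one (hy : ∑ i, y i = 1) : (0 : ℝ) < k := by
  rcases k with _ | k
  · simp at hy
  · positivity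

theorem gini_eq_of_sum_eq_one (hy : ∑ i, y i = 1) : gini y = (2 * rankSum y - (k + 1)) / k := by
  rw [gini, rankSum, hy, mul_one, sub_div]

theorem neg_one_le_gini (hy0 : ∀ i, 0 ≤ y i) (hy : ∑ i, y i = 1) : -1 ≤ gini y := by
  have hW : 1 ≤ rankSum y :=
    hy ▸ Finset.sum_le_sum fun i _ =>
      le_mul_of_one_le_left (hy0 i) (le_add_of_nonneg_left (Nat.cast_nonneg _))
  rw [gini_eq_of_sum_eq_one hy, le_div_iff₀ (natCast_pos_of_sum_eq_one hy)]
  linarith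

theorem gini_smul_add_smul {a b : ℝ} (hab : a + b = 1) (hy : ∑ i, y i = 1)
    (hz : ∑ i, z i = 1) : gini (a • y + b • z) = a * gini y + b * gini z := by
  have hsum : ∑ i, (a • y + b • z) i = 1 := by
    simp [Finset.sum_add_distrib, ← Finset.mul_sum, hy, hz, hab]
  have hrank : rankSum (a • y + b • z) = a * rankSum y + b * rankSum z := by
    simp only [rankSum, Finset.mul_sum, ← Finset.sum_add_distrib]
    refine Finset.sum_congr rfl fun i _ => ?_
    simp only [Pi.add_apply, Pi.smul_apply, smul_eq_mul]
    ring
  rw [gini_eq_of_sum_eq_one hsum, gini_eq_of_sum_eq_one hy, gini_eq_of_sum_eq_one hz, hrank,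
    eq_sub_of_add_eq' hab]
  ring

theorem abs_gini_sub_gini_le (hy : ∑ i, y i = 1) (hz : ∑ i, z i = 1) :
    |gini y - gini z| ≤ 2 * ∑ i, |y i - z i| := by
  have hk := natCast_pos_of_sum_eq_one hy
  have hrank : |rankSum y - rankSum z| ≤ k * ∑ i, |y i - z i| := by
    rw [rankSum, rankSum, ← Finset.sum_sub_distrib, Finset.mul_sum]
    refine (Finset.abs_sum_le_sum_abs _ _).trans (Finset.sum_le_sum fun i _ => ?_)
    rw [← mul_sub, abs_mul, abs_of_pos (by positivity)]
    gcongr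
    exact_mod_cast i.isLt
  rw [gini_eq_of_sum_eq_one hy, gini_eq_of_sum_eq_one hz, ← sub_div, abs_div, abs_of_pos hk,
    div_le_iff₀ hk, show 2 * rankSum y - (k + 1) - (2 * rankSum z - (k + 1))
      = 2 * (rankSum y - rankSum z) by ring, abs_mul, abs_two]
  nlinarith

end Gini

section SortedAllocs

variable {k : ℕ} (c : Fin k → ℝ)

def sortedAllocs (u : ℝ) : Set (Fin k → ℝ) :=
  {x | Monotone x ∧ (∀ i, 0 ≤ x i) ∧ ∑ i, x i = 1 ∧ ∀ i, x i ≤ u * c i}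

noncomputable def minGini (u : ℝ) : ℝ := sInf (gini '' sortedAllocs c u)

variable {c}

theorem sortedAllocs_mono (hc0 : ∀ i, 0 ≤ c i) {u v : ℝ} (huv : u ≤ v) :
    sortedAllocs c u ⊆ sortedAllocs c v :=
  fun _ ⟨hx, hx0, hx1, hxc⟩ => ⟨hx, hx0, hx1, fun i => (hxc i).trans (by gcongr; exact hc0 i)⟩

theorem smul_add_smul_mem_sortedAllocs {u v a b : ℝ} {x y : Fin k → ℝ}
    (hx : x ∈ sortedAllocs c u) (hy : y ∈ sortedAllocs c v) (ha : 0 ≤ a) (hb : 0 ≤ b)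
    (hab : a + b = 1) : a • x + b • y ∈ sortedAllocs c (a * u + b * v) := by
  obtain ⟨hxm, hx0, hx1, hxc⟩ := hx
  obtain ⟨hym, hy0, hy1, hyc⟩ := hy
  refine ⟨(hxm.const_mul ha).add (hym.const_mul hb), fun i => ?_, ?_, fun i => ?_⟩
  · simp only [Pi.add_apply, Pi.smul_apply, smul_eq_mul]
    have := hx0 i; have := hy0 i; positivity
  · simp [Finset.sum_add_distrib, ← Finset.mul_sum, hx1, hy1, hab]
  · simp only [Pi.add_apply, Pi.smul_apply, smul_eq_mul]
    nlinarith [mul_le_mul_of_nonneg_left (hxc i) ha, mul_le_mul_of_nonneg_left (hyc i) hb]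

theorem proportional_mem_sortedAllocs (hc : Monotone c) (hc0 : ∀ i, 0 ≤ c i)
    (hS : 0 < ∑ i, c i) {u : ℝ} (hu : (∑ i, c i)⁻¹ ≤ u) :
    (∑ i, c i)⁻¹ • c ∈ sortedAllocs c u := by
  refine ⟨hc.const_mul (inv_nonneg.2 hS.le), fun i => ?_, ?_, fun i => ?_⟩
  · simp only [Pi.smul_apply, smul_eq_mul]; have := hc0 i; positivity
  · simp [← Finset.mul_sum, hS.ne']
  · simp only [Pi.smul_apply, smul_eq_mul]; gcongr; exact hc0 i

theorem bddBelow_gini_image_sortedAllocs (u : ℝ) : BddBelow (gini '' sortedAllocs c u) :=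
  ⟨-1, by rintro _ ⟨x, ⟨-, hx0, hx1, -⟩, rfl⟩; exact neg_one_le_gini hx0 hx1⟩

theorem minGini_le_gini {u : ℝ} {x : Fin k → ℝ} (hx : x ∈ sortedAllocs c u) :
    minGini c u ≤ gini x :=
  csInf_le (bddBelow_gini_image_sortedAllocs u) ⟨x, hx, rfl⟩

theorem minGini_le_minGini (hc0 : ∀ i, 0 ≤ c i) {u v : ℝ} (hne : (sortedAllocs c u).Nonempty)
    (huv : u ≤ v) : minGini c v ≤ minGini c u :=
  csInf_le_csInf (bddBelow_gini_image_sortedAllocs v) (hne.image gini)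
    (Set.image_mono (sortedAllocs_mono hc0 huv))

theorem convexOn_minGini (hc : Monotone c) (hc0 : ∀ i, 0 ≤ c i) (hS : 0 < ∑ i, c i) :
    ConvexOn ℝ (Set.Ici (∑ i, c i)⁻¹) (minGini c) := by
  refine ⟨convex_Ici _, fun u hu v hv a b ha hb hab => le_of_forall_pos_le_add fun ε hε => ?_⟩
  have hne : ∀ w ∈ Set.Ici (∑ i, c i)⁻¹, (gini '' sortedAllocs c w).Nonempty :=
    fun w hw => ⟨_, _, proportional_mem_sortedAllocs hc hc0 hS hw, rfl⟩
  obtain ⟨_, ⟨x, hx, rfl⟩, hxε⟩ := exists_lt_of_csInf_lt (hne u hu) (lt_add_of_pos_right _ hε)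
  obtain ⟨_, ⟨y, hy, rfl⟩, hyε⟩ := exists_lt_of_csInf_lt (hne v hv) (lt_add_of_pos_right _ hε)
  calc minGini c (a • u + b • v) ≤ gini (a • x + b • y) :=
        minGini_le_gini (smul_add_smul_mem_sortedAllocs hx hy ha hb hab)
    _ = a * gini x + b * gini y := gini_smul_add_smul hab hx.2.2.1 hy.2.2.1
    _ ≤ a * (minGini c u + ε) + b * (minGini c v + ε) := by gcongr; exacts [hxε.le, hyε.le]
    _ = a • minGini c u + b • minGini c v + ε := by
        simp only [smul_eq_mul]; rw [eq_sub_of_add_eq' hab]; ring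

theorem sum_abs_sub_proportional_le (hc0 : ∀ i, 0 ≤ c i) (hS : 0 < ∑ i, c i) {u : ℝ}
    (hu : (∑ i, c i)⁻¹ ≤ u) {x : Fin k → ℝ} (hx : x ∈ sortedAllocs c u) :
    ∑ i, |x i - (∑ j, c j)⁻¹ * c i| ≤ 2 * (u * ∑ i, c i - 1) := by
  obtain ⟨-, -, hx1, hxc⟩ := hx
  have hcu : ∀ i, (∑ j, c j)⁻¹ * c i ≤ u * c i := fun i => by gcongr; exact hc0 i
  calc ∑ i, |x i - (∑ j, c j)⁻¹ * c i|
      ≤ ∑ i, (2 * (u * c i) - x i - (∑ j, c j)⁻¹ * c i) :=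
        Finset.sum_le_sum fun i _ => abs_sub_le_iff.2 ⟨by linarith [hxc i, hcu i],
          by linarith [hxc i, hcu i]⟩
    _ = 2 * (u * ∑ i, c i - 1) := by
        simp only [Finset.sum_sub_distrib, ← Finset.mul_sum, hx1, inv_mul_cancel₀ hS.ne']
        ring

theorem minGini_inv_sum_sub_le (hc : Monotone c) (hc0 : ∀ i, 0 ≤ c i) (hS : 0 < ∑ i, c i)
    {u : ℝ} (hu : (∑ i, c i)⁻¹ ≤ u) :
    minGini c (∑ i, c i)⁻¹ - 4 * (u * ∑ i, c i - 1) ≤ minGini c u := by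
  have hw := proportional_mem_sortedAllocs hc hc0 hS le_rfl
  refine le_csInf ⟨_, _, sortedAllocs_mono hc0 hu hw, rfl⟩ ?_
  rintro _ ⟨x, hx, rfl⟩
  have hdist := (abs_sub_le_iff.1 (abs_gini_sub_gini_le hx.2.2.1 hw.2.2.1)).2
  simp only [Pi.smul_apply, smul_eq_mul] at hdist
  linarith [minGini_le_gini hw, sum_abs_sub_proportional_le hc0 hS hu hx]

theorem continuousWithinAt_minGini_inv_sum (hc : Monotone c) (hc0 : ∀ i, 0 ≤ c i)
    (hS : 0 < ∑ i, c i) :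
    ContinuousWithinAt (minGini c) (Set.Ici (∑ i, c i)⁻¹) (∑ i, c i)⁻¹ := by
  have hw := proportional_mem_sortedAllocs hc hc0 hS le_rfl
  have hlower : Tendsto (fun u => minGini c (∑ i, c i)⁻¹ - 4 * (u * ∑ i, c i - 1))
      (𝓝[≥] (∑ i, c i)⁻¹) (𝓝 (minGini c (∑ i, c i)⁻¹)) := by
    refine tendsto_nhdsWithin_of_tendsto_nhds ?_
    have hcont : Continuous fun u => minGini c (∑ i, c i)⁻¹ - 4 * (u * ∑ i, c i - 1) := by
      fun_prop
    convert hcont.tendsto _ using 2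
    rw [inv_mul_cancel₀ hS.ne']; ring
  exact tendsto_of_tendsto_of_tendsto_of_le_of_le' hlower tendsto_const_nhds
    (eventually_nhdsWithin_of_forall fun u hu => minGini_inv_sum_sub_le hc hc0 hS hu)
    (eventually_nhdsWithin_of_forall fun u hu => minGini_le_minGini hc0 ⟨_, hw⟩ hu)

theorem continuousOn_minGini (hc : Monotone c) (hc0 : ∀ i, 0 ≤ c i) (hS : 0 < ∑ i, c i) :
    ContinuousOn (minGini c) (Set.Ici (∑ i, c i)⁻¹) :=
  (convexOn_minGini hc hc0 hS).continuousOn_Ici (continuousWithinAt_minGini_inv_sum hc hc0 hS)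

end SortedAllocs

section Sorting

variable {n : ℕ}

theorem sortedAsc_of_monotone {a : Fin n → ℝ} (ha : Monotone a) : sortedAsc a = a := by
  rw [sortedAsc, Tuple.sort_eq_refl_iff_monotone.2 ha]
  rfl

theorem sortedAsc_le_of_le {a c : Fin n → ℝ} (hc : Monotone c) (hac : ∀ i, a i ≤ c i)
    (i : Fin n) : sortedAsc a i ≤ c i := by
  obtain ⟨j, hij, hji⟩ : ∃ j, i ≤ j ∧ Tuple.sort a j ≤ i := by
    by_contra! h
    have hcard : #(Finset.Ici i) ≤ #(Finset.Ioi i) :=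
      Finset.card_le_card_of_injOn (Tuple.sort a)
        (fun j hj => by simpa using h j (by simpa using hj)) (Tuple.sort a).injective.injOn
    simp only [Fin.card_Ici, Fin.card_Ioi] at hcard
    omega
  calc sortedAsc a i ≤ sortedAsc a j := Tuple.monotone_sort a hij
    _ ≤ c (Tuple.sort a j) := hac _
    _ ≤ c i := hc hji

theorem card_filter_sortedAsc_eq_zero (a : Fin n → ℝ) :
    (univ.filter fun j => sortedAsc a j = 0).card = (univ.filter fun j => a j = 0).card :=
  Finset.card_equiv (Tuple.sort a) fun _ => by
    simp only [Finset.mem_filter, Finset.mem_univ, true_and]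
    rfl

theorem sortedAsc_eq_zero_of_lt {a : Fin n → ℝ} (ha0 : ∀ i, 0 ≤ a i) {m : ℕ}
    (hm : m ≤ (univ.filter fun i => a i = 0).card) {j : Fin n} (hj : (j : ℕ) < m) :
    sortedAsc a j = 0 := by
  by_contra hne
  have hpos : 0 < sortedAsc a j := (ha0 _).lt_of_ne' hne
  have hsub : (univ.filter fun i => sortedAsc a i = 0) ⊆ Finset.Iio j := fun i hi => by
    simp only [Finset.mem_filter, Finset.mem_univ, true_and] at hi
    by_contra hij
    have := Tuple.monotone_sort a (not_lt.1 (by simpa using hij))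
    simp only [sortedAsc] at hi hpos
    linarith
  have := Finset.card_le_card hsub
  rw [Fin.card_Iio, card_filter_sortedAsc_eq_zero] at this
  omega

end Sorting

section TopWinners

variable {n k : ℕ}

def topEmb (hkn : k ≤ n) (i : Fin k) : Fin n := ⟨n - k + i, by have := i.isLt; omega⟩

theorem topEmb_strictMono (hkn : k ≤ n) : StrictMono (topEmb hkn) :=
  fun i j hij => by rw [Fin.lt_def] at hij ⊢; simp only [topEmb]; omega

theorem exists_topEmb_eq_or_lt (hkn : k ≤ n) (j : Fin n) :
    (∃ i, topEmb hkn i = j) ∨ (j : ℕ) < n - k := by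
  rcases lt_or_ge (j : ℕ) (n - k) with hj | hj
  · exact .inr hj
  · exact .inl ⟨⟨j - (n - k), by have := j.isLt; omega⟩, Fin.ext (by simp only [topEmb]; omega)⟩

theorem sum_comp_topEmb (hkn : k ≤ n) (f : Fin n → ℝ) :
    ∑ i, f (topEmb hkn i) = ∑ j ∈ univ.filter (fun j : Fin n => n - k ≤ (j : ℕ)), f j := by
  refine Finset.sum_nbij (topEmb hkn) (fun i _ => ?_) (topEmb_strictMono hkn).injective.injOn
    (fun j hj => ?_) fun _ _ => rfl
  · simp [topEmb]; omega
  · simp only [Finset.coe_filter, Finset.mem_univ, true_and, Set.mem_ofPred_eq] at hj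
    simpa [hj.not_gt] using exists_topEmb_eq_or_lt hkn j

theorem sum_comp_topEmb_of_eq_zero (hkn : k ≤ n) {f : Fin n → ℝ}
    (hf : ∀ j : Fin n, (j : ℕ) < n - k → f j = 0) : ∑ i, f (topEmb hkn i) = ∑ j, f j := by
  rw [sum_comp_topEmb, Finset.sum_filter_of_ne]
  exact fun j _ hj => not_lt.1 fun hlt => hj (hf j hlt)

end TopWinners

section Reduction

variable {n k : ℕ} {b : Fin n → ℝ} {p : ℝ}

theorem flexGini_eq_gini_comp_topEmb (hkn : k ≤ n) (a : Fin n → ℝ) :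
    flexGini k a = gini (sortedAsc a ∘ topEmb hkn) := by
  rw [flexGini, dif_pos hkn]
  rfl

theorem sortedAsc_comp_topEmb_mem (hmono : Monotone b) (hkn : k ≤ n) (hp : 0 < p)
    {a : Fin n → ℝ} (ha : Feasible b k p a) :
    sortedAsc a ∘ topEmb hkn ∈ sortedAllocs (b ∘ topEmb hkn) p⁻¹ := by
  obtain ⟨ha0, ha1, hab, hzero⟩ := ha
  have hcap : ∀ j, sortedAsc a j ≤ p⁻¹ * b j :=
    sortedAsc_le_of_le (hmono.const_mul (inv_nonneg.2 hp.le))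
      fun j => (le_inv_mul_iff₀' hp).2 (hab j)
  refine ⟨(Tuple.monotone_sort a).comp (topEmb_strictMono hkn).monotone, fun _ => ha0 _, ?_,
    fun _ => hcap _⟩
  simp only [Function.comp_apply]
  rw [sum_comp_topEmb_of_eq_zero hkn fun j hj => sortedAsc_eq_zero_of_lt ha0 hzero hj]
  exact (Equiv.sum_comp (Tuple.sort a) a).trans ha1

theorem exists_feasible_flexGini_eq (hnn : ∀ i, 0 ≤ b i) (hkn : k ≤ n) (hp : 0 < p)
    {x : Fin k → ℝ} (hx : x ∈ sortedAllocs (b ∘ topEmb hkn) p⁻¹) :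
    ∃ a, Feasible b k p a ∧ flexGini k a = gini x := by
  obtain ⟨hxm, hx0, hx1, hxc⟩ := hx
  set a := Function.extend (topEmb hkn) x 0
  have htop : ∀ i, a (topEmb hkn i) = x i := (topEmb_strictMono hkn).injective.extend_apply x 0
  have hbot : ∀ j : Fin n, (j : ℕ) < n - k → a j = 0 := fun j hj =>
    Function.extend_apply' _ _ _ (by rintro ⟨i, rfl⟩; simp [topEmb] at hj)
  have ha0 : ∀ j, 0 ≤ a j := fun j => by
    rcases exists_topEmb_eq_or_lt hkn j with ⟨i, rfl⟩ | hj
    · exact htop i ▸ hx0 i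
    · exact (hbot j hj).ge
  have hmono : Monotone a := fun j j' hjj' => by
    rcases exists_topEmb_eq_or_lt hkn j' with ⟨i', rfl⟩ | hj'
    · rcases exists_topEmb_eq_or_lt hkn j with ⟨i, rfl⟩ | hj
      · rw [htop, htop]
        exact hxm ((topEmb_strictMono hkn).le_iff_le.1 hjj')
      · exact (hbot j hj).trans_le (ha0 _)
    · rw [hbot j' hj', hbot j (lt_of_le_of_lt (Fin.le_def.1 hjj') hj')]
  refine ⟨a, ⟨ha0, ?_, fun j => ?_, ?_⟩, ?_⟩
  · rw [← sum_comp_topEmb_of_eq_zero hkn hbot]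
    simpa only [htop] using hx1
  · rcases exists_topEmb_eq_or_lt hkn j with ⟨i, rfl⟩ | hj
    · exact htop i ▸ (le_inv_mul_iff₀' hp).1 (hxc i)
    · simpa only [hbot j hj, zero_mul] using hnn j
  · calc n - k = (univ.filter fun j : Fin n => (j : ℕ) < n - k).card := by
          rw [Fin.card_filter_val_lt]; omega
      _ ≤ (univ.filter fun j => a j = 0).card :=
          Finset.card_le_card fun j hj => by
            simp only [Finset.mem_filter, Finset.mem_univ, true_and] at hj ⊢
            exact hbot j hj
  · rw [flexGini_eq_gini_comp_topEmb hkn, sortedAsc_of_monotone hmono]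
    exact congrArg gini (funext htop)

theorem image_flexGini_feasible (hmono : Monotone b) (hnn : ∀ i, 0 ≤ b i) (hkn : k ≤ n)
    (hp : 0 < p) :
    flexGini k '' {a | Feasible b k p a} = gini '' sortedAllocs (b ∘ topEmb hkn) p⁻¹ := by
  ext g
  constructor
  · rintro ⟨a, ha, rfl⟩
    exact ⟨_, sortedAsc_comp_topEmb_mem hmono hkn hp ha,
      (flexGini_eq_gini_comp_topEmb hkn a).symm⟩
  · rintro ⟨x, hx, rfl⟩
    obtain ⟨a, ha, hax⟩ := exists_feasible_flexGini_eq hnn hkn hp hx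
    exact ⟨a, ha, hax⟩

theorem gStar_eq_minGini (hmono : Monotone b) (hnn : ∀ i, 0 ≤ b i) (hkn : k ≤ n) (hp : 0 < p)
    (hne : (sortedAllocs (b ∘ topEmb hkn) p⁻¹).Nonempty) :
    gStar b k p = minGini (b ∘ topEmb hkn) p⁻¹ := by
  have himage := image_flexGini_feasible hmono hnn hkn hp
  have hfeas : ∃ a, Feasible b k p a := by
    obtain ⟨_, ⟨a, ha, -⟩⟩ : (flexGini k '' {a | Feasible b k p a}).Nonempty :=
      himage ▸ hne.image gini
    exact ⟨a, ha⟩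
  rw [gStar, if_pos hfeas, himage, minGini]

end Reduction

/-- If `b_{n-k+1} > 0`, the minimum-Gini function `g*_k` is continuous on
`(0, ∑_{i=n-k+1}^n b_i]`. -/
theorem gStar_continuousOn {n : ℕ} (b : Fin n → ℝ) (hmono : Monotone b) (hnn : ∀ i, 0 ≤ b i)
    (k : ℕ) (hk1 : 1 ≤ k) (hkn : k ≤ n) (hpos : 0 < b ⟨n - k, by omega⟩) :
    ContinuousOn (fun p => gStar b k p)
      (Set.Ioc 0 (∑ i ∈ Finset.univ.filter (fun i : Fin n => n - k ≤ (i : ℕ)), b i)) := by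
  set c := b ∘ topEmb hkn
  have hc : Monotone c := hmono.comp (topEmb_strictMono hkn).monotone
  have hc0 : ∀ i, 0 ≤ c i := fun i => hnn _
  have hS : 0 < ∑ i, c i := hpos.trans_le
    (Finset.single_le_sum (fun i _ => hc0 i) (Finset.mem_univ (⟨0, hk1⟩ : Fin k)))
  have hinv : Set.MapsTo (·⁻¹) (Set.Ioc 0 (∑ i, c i)) (Set.Ici (∑ i, c i)⁻¹) :=
    fun p hp => inv_anti₀ hp.1 hp.2
  rw [← sum_comp_topEmb hkn]
  refine ((continuousOn_minGini hc hc0 hS).comp (continuousOn_inv₀.mono fun p hp => hp.1.ne')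
    hinv).congr fun p hp => ?_
  exact gStar_eq_minGini hmono hnn hkn hp.1 ⟨_, proportional_mem_sortedAllocs hc hc0 hS (hinv hp)⟩
end

section
/- Fix a winner number k with 1 ≤ k ≤ n and a Gini cap g ∈ (0,1). The maximum price p*_k(b) is nondecreasing in every coordinate of the budget profile b: if b' ≥ b coordinatewise (and both profiles have positive (n−k+1)-st smallest budget so that the maximum prices exist), then p*_k(b') ≥ p*_k(b). Consequently, for any finite set K of allowed winner numbers, the Gini mechanism's price p*(b) = max_{k∈K} p*_k(b) is also nondecreasing in every coordinate. -/
open Finset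

/-!
Raising budgets only relaxes the spending constraints `aᵢ p ≤ bᵢ`, so every allocation feasible
for `b` stays feasible for `b'`. Hence at each price the minimal flexible Gini index can only
drop, the set of prices meeting the cap `g` can only grow, and so does its supremum; the maximum
over the allowed winner numbers inherits this monotonicity.
-/

lemma gini_ge_neg_two {k : ℕ} (y : Fin k → ℝ) (hy : ∀ i, 0 ≤ y i) : -2 ≤ gini y := by
  have hfrac : 0 ≤ 2 * (∑ i : Fin k, (((i : ℕ) : ℝ) + 1) * y i) / ((k : ℝ) * ∑ i, y i) := by
    refine div_nonneg (mul_nonneg zero_le_two (sum_nonneg fun i _ => ?_))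
      (mul_nonneg k.cast_nonneg (sum_nonneg fun i _ => hy i))
    exact mul_nonneg (by positivity) (hy i)
  have hk : ((k : ℝ) + 1) / k ≤ 2 := by
    rcases Nat.eq_zero_or_pos k with rfl | hk
    · norm_num
    · have hk1 : (1 : ℝ) ≤ k := by exact_mod_cast hk
      rw [div_le_iff₀ (by linarith)]
      linarith
  rw [gini]
  linarith

lemma flexGini_ge_neg_two {n : ℕ} (k : ℕ) {a : Fin n → ℝ} (ha : ∀ i, 0 ≤ a i) :
    -2 ≤ flexGini k a := by
  unfold flexGini
  split
  · exact gini_ge_neg_two _ fun i => ha _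
  · norm_num

section Budgets

variable {n : ℕ} {b b' : Fin n → ℝ} {k : ℕ} {p g : ℝ}

lemma Feasible.of_le (hle : ∀ i, b i ≤ b' i) {a : Fin n → ℝ} (ha : Feasible b k p a) :
    Feasible b' k p a :=
  ⟨ha.1, ha.2.1, fun i => (ha.2.2.1 i).trans (hle i), ha.2.2.2⟩

lemma Feasible.le_sum {a : Fin n → ℝ} (ha : Feasible b k p a) : p ≤ ∑ i, b i :=
  calc p = ∑ i, a i * p := by rw [← Finset.sum_mul, ha.2.1, one_mul]
    _ ≤ ∑ i, b i := Finset.sum_le_sum fun i _ => ha.2.2.1 i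

lemma exists_feasible_of_gStar_lt_one (h : gStar b k p < 1) : ∃ a, Feasible b k p a := by
  classical
  by_contra hne
  rw [gStar, if_neg hne] at h
  exact lt_irrefl 1 h

lemma gStar_le_gStar (hle : ∀ i, b i ≤ b' i) (hex : ∃ a, Feasible b k p a) :
    gStar b' k p ≤ gStar b k p := by
  classical
  obtain ⟨a, ha⟩ := hex
  rw [gStar, if_pos ⟨a, ha.of_le hle⟩, gStar, if_pos ⟨a, ha⟩]
  refine csInf_le_csInf ⟨-2, ?_⟩ ⟨flexGini k a, a, ha, rfl⟩
    (Set.image_mono fun c hc => Feasible.of_le hle hc)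
  rintro x ⟨c, hc, rfl⟩
  exact flexGini_ge_neg_two k hc.1

lemma priceSet_subset (hg : g < 1) (hle : ∀ i, b i ≤ b' i) :
    {p : ℝ | 0 < p ∧ gStar b k p ≤ g} ⊆ {p : ℝ | 0 < p ∧ gStar b' k p ≤ g} := by
  rintro p ⟨hp, hpg⟩
  exact ⟨hp, (gStar_le_gStar hle (exists_feasible_of_gStar_lt_one (hpg.trans_lt hg))).trans hpg⟩

-- Without this bound `sSup` would return the junk value `0`.
lemma bddAbove_priceSet (hg : g < 1) : BddAbove {p : ℝ | 0 < p ∧ gStar b k p ≤ g} := by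
  refine ⟨∑ i, b i, ?_⟩
  rintro p ⟨-, hpg⟩
  obtain ⟨a, ha⟩ := exists_feasible_of_gStar_lt_one (hpg.trans_lt hg)
  exact ha.le_sum

lemma pStar_le_pStar (hg : g < 1) (hle : ∀ i, b i ≤ b' i) : pStar b k g ≤ pStar b' k g := by
  rcases Set.eq_empty_or_nonempty {p : ℝ | 0 < p ∧ gStar b k p ≤ g} with hS | hS
  · rw [pStar, hS, Real.sSup_empty]
    exact Real.sSup_nonneg fun p hp => hp.1.le
  · exact csSup_le_csSup (bddAbove_priceSet hg) hS (priceSet_subset hg hle)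

lemma pStarK_le_pStarK (hg : g < 1) (hle : ∀ i, b i ≤ b' i) (K : Finset ℕ) :
    pStarK b K g ≤ pStarK b' K g := by
  rw [pStarK, pStarK, sSup_image', sSup_image']
  exact ciSup_mono (Set.finite_range _).bddAbove fun k => pStar_le_pStar hg hle

end Budgets

theorem pStar_mono_general {n : ℕ} (g : ℝ) (hg : g ∈ Set.Ioo (0 : ℝ) 1)
    (b b' : Fin n → ℝ) (hle : ∀ i, b i ≤ b' i) :
    (∀ k : ℕ, 1 ≤ k → k ≤ n → 0 < nthSmallest b (n - k) → pStar b k g ≤ pStar b' k g) ∧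
      ∀ K : Finset ℕ, K.Nonempty → (∀ k ∈ K, 1 ≤ k ∧ k ≤ n) →
        (∀ k ∈ K, 0 < nthSmallest b (n - k)) →
        pStarK b K g ≤ pStarK b' K g :=
  ⟨fun _ _ _ _ => pStar_le_pStar hg.2 hle, fun K _ _ _ => pStarK_le_pStarK hg.2 hle K⟩

/-- The maximum price `p*_k(b)` is nondecreasing in every coordinate of the
budget profile: if `b' ≥ b` coordinatewise (both sorted, with positive `(n-k+1)`-st smallest
budget), then `p*_k(b') ≥ p*_k(b)`; consequently the Gini mechanism's price
`p*(b) = max_{k ∈ K} p*_k(b)` is also nondecreasing. -/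
theorem pStar_mono {n : ℕ} (g : ℝ) (hg : g ∈ Set.Ioo (0 : ℝ) 1)
    (b b' : Fin n → ℝ) (hmono : Monotone b) (hmono' : Monotone b')
    (hnn : ∀ i, 0 ≤ b i) (hle : ∀ i, b i ≤ b' i) :
    (∀ k : ℕ, 1 ≤ k → k ≤ n → 0 < nthSmallest b (n - k) → pStar b k g ≤ pStar b' k g) ∧
      ∀ K : Finset ℕ, K.Nonempty → (∀ k ∈ K, 1 ≤ k ∧ k ≤ n) →
        (∀ k ∈ K, 0 < nthSmallest b (n - k)) →
        pStarK b K g ≤ pStarK b' K g :=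
  pStar_mono_general g hg b b' hle
end

section
/- Let (y_1,…,y_n) be a nonnegative real vector sorted in ascending order with Σ_{i=1}^n y_i > 0, and suppose y_i = 0 for all i ≤ m for some m with 0 ≤ m < n. Then its Gini index satisfies G(y) = 2·(Σ_{i=1}^n i·y_i)/(n·Σ_{i=1}^n y_i) − (n+1)/n ≥ (2(m+1) − (n+1))/n. In particular, if m ≥ 75 and n = 100 the Gini index is at least 0.51, so for any Gini cap g < 1 there exist profiles where every allocation violates the cap under the standard (non-flexible) Gini index. -/
open Finset

/-! Zeros in the first `m` positions put all the mass at ranks `≥ m + 1`, so the rank-weighted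
sum `∑ (i + 1) yᵢ` is at least `(m + 1) ∑ yᵢ`; this is the whole bound. Taking `m = n - 1`
gives `G ≥ 1 - 1/n`, which exceeds any cap `g < 1` once `n` is large. -/

lemma add_one_mul_sum_le_sum_rank_mul {n : ℕ} (y : Fin n → ℝ) (hnn : ∀ i, 0 ≤ y i) (m : ℕ)
    (hzero : ∀ i : Fin n, (i : ℕ) < m → y i = 0) :
    ((m : ℝ) + 1) * ∑ i, y i ≤ ∑ i : Fin n, (((i : ℕ) : ℝ) + 1) * y i := by
  rw [mul_sum]
  refine sum_le_sum fun i _ => ?_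
  rcases lt_or_ge (i : ℕ) m with hi | hi
  · simp [hzero i hi]
  · gcongr
    exact hnn i

lemma le_gini_of_eq_zero {n : ℕ} (y : Fin n → ℝ) (hnn : ∀ i, 0 ≤ y i) (hsum : 0 < ∑ i, y i)
    (m : ℕ) (hzero : ∀ i : Fin n, (i : ℕ) < m → y i = 0) :
    (2 * ((m : ℝ) + 1) - ((n : ℝ) + 1)) / n ≤ gini y := by
  have hrank : 2 * ((m : ℝ) + 1) ≤ 2 * (∑ i : Fin n, (((i : ℕ) : ℝ) + 1) * y i) / ∑ i, y i := by
    rw [le_div_iff₀ hsum, mul_assoc]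
    gcongr
    exact add_one_mul_sum_le_sum_rank_mul y hnn m hzero
  rw [gini, sub_div, mul_comm (n : ℝ), ← div_div]
  gcongr

theorem gini_lower_bound_of_zeros_general {n : ℕ} (y : Fin n → ℝ)
    (hnn : ∀ i, 0 ≤ y i) (hsum : 0 < ∑ i, y i) (m : ℕ)
    (hzero : ∀ i : Fin n, (i : ℕ) < m → y i = 0) :
    (2 * ((m : ℝ) + 1) - ((n : ℝ) + 1)) / n ≤ gini y ∧
      (n = 100 → 75 ≤ m → (0.51 : ℝ) ≤ gini y) ∧
      ∀ g : ℝ, g < 1 → ∃ (n' m' : ℕ), m' < n' ∧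
        ∀ y' : Fin n' → ℝ, Monotone y' → (∀ i, 0 ≤ y' i) → 0 < ∑ i, y' i →
          (∀ i : Fin n', (i : ℕ) < m' → y' i = 0) → g < gini y' := by
  have hbound := le_gini_of_eq_zero y hnn hsum m hzero
  refine ⟨hbound, fun hn hm => ?_, fun g hg => ?_⟩
  · have hm' : (75 : ℝ) ≤ m := by exact_mod_cast hm
    subst hn
    refine le_trans ?_ hbound
    rw [le_div_iff₀ (by norm_num)]
    push_cast
    linarith
  · obtain ⟨N, hN⟩ := exists_nat_one_div_lt (sub_pos.mpr hg)
    refine ⟨N + 1, N, N.lt_succ_self, fun y' _ hnn' hsum' hzero' => ?_⟩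
    calc g < 1 - 1 / ((N : ℝ) + 1) := by linarith
      _ = (2 * ((N : ℝ) + 1) - (((N + 1 : ℕ) : ℝ) + 1)) / (N + 1 : ℕ) := by
        push_cast
        field_simp
        ring
      _ ≤ gini y' := le_gini_of_eq_zero y' hnn' hsum' N hzero'

/-- If an ascending-sorted nonnegative vector with positive sum has its first
`m` entries equal to `0` (with `m < n`), then its Gini index is at least `(2(m+1) - (n+1))/n`.
In particular, with `n = 100` and `m ≥ 75` the Gini index is at least `0.51`, so for any Gini
cap `g < 1` there exist profiles where every allocation violates the cap under the standard
(non-flexible) Gini index. -/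
theorem gini_lower_bound_of_zeros {n : ℕ} (y : Fin n → ℝ) (hmono : Monotone y)
    (hnn : ∀ i, 0 ≤ y i) (hsum : 0 < ∑ i, y i) (m : ℕ) (hm : m < n)
    (hzero : ∀ i : Fin n, (i : ℕ) < m → y i = 0) :
    (2 * ((m : ℝ) + 1) - ((n : ℝ) + 1)) / n ≤ gini y ∧
      (n = 100 → 75 ≤ m → (0.51 : ℝ) ≤ gini y) ∧
      ∀ g : ℝ, g < 1 → ∃ (n' m' : ℕ), m' < n' ∧
        ∀ y' : Fin n' → ℝ, Monotone y' → (∀ i, 0 ≤ y' i) → 0 < ∑ i, y' i →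
          (∀ i : Fin n', (i : ℕ) < m' → y' i = 0) → g < gini y' :=
  gini_lower_bound_of_zeros_general y hnn hsum m hzero
end
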